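/- Let K ⊂ ℝᵈ be a convex body, θ ∈ S^{d−1}, and t ∈ [m_{K,θ}, h_K(θ)]. Then A_{K,θ}(t) ≥ α_θ(t)·ψ_{K,θ}(t), where α_θ(t) = d⁻¹·(h_K(θ) − t). -/

import Mathlib

open MeasureTheory Set intervalIntegral
open scoped RealInnerProductSpace ENNReal

noncomputable section

/-- Euclidean space `ℝᵈ`. -/
abbrev Euc (d : ℕ) := EuclideanSpace ℝ (Fin d)

/-- A convex body: a compact convex set with nonempty interior. -/
def IsConvexBody {d : ℕ} (K : Set (Euc d)) : Prop :=
  IsCompact K ∧ Convex ℝ K ∧ (interior K).Nonempty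

/-- The support function `h_K(θ) = sup_{x ∈ K} ⟨θ, x⟩`. -/
def suppFn {d : ℕ} (K : Set (Euc d)) (θ : Euc d) : ℝ :=
  sSup ((fun x => ⟪θ, x⟫) '' K)

/-- The normalized parallel section function
`ψ_{K,θ}(t) = vol_{d-1}(K ∩ {y : ⟨θ,y⟩ = t}) / vol_d(K)`, where the `(d-1)`-dimensional
volume is Hausdorff measure. -/
def psi {d : ℕ} (K : Set (Euc d)) (θ : Euc d) (t : ℝ) : ℝ :=
  (μH[(d : ℝ) - 1] (K ∩ {y : Euc d | ⟪θ, y⟫ = t})).toReal / (volume K).toReal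

/-- `A_{K,θ}(t) = ∫_t^{h_K(θ)} ψ_{K,θ}(s) ds`. -/
def sectionTail {d : ℕ} (K : Set (Euc d)) (θ : Euc d) (t : ℝ) : ℝ :=
  ∫ s in t..(suppFn K θ), psi K θ s

/-!
Let `x₀ ∈ K` attain `h = h_K(θ)`. For `t ≤ s < h`, the homothety with centre `x₀` and ratio
`c = (h - s) / (h - t)` maps the section of `K` at height `t` into the section at height `s`
(by convexity) and multiplies `(d - 1)`-dimensional Hausdorff measure by `c ^ (d - 1)`; the
sections are bounded pieces of hyperplanes, so these measures are finite. Hence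
`ψ(s) ≥ ((h - s) / (h - t)) ^ (d - 1) ψ(t)`, and integrating over `[t, h]` gives
`A(t) ≥ (h - t) ψ(t) / d`.
-/

section Hyperplane

variable {E : Type*} [NormedAddCommGroup E] [InnerProductSpace ℝ E]

def slice (K : Set E) (θ : E) (t : ℝ) : Set E :=
  K ∩ {y | ⟪θ, y⟫ = t}

lemma hausdorffMeasure_ne_top_of_subset_hyperplane [FiniteDimensional ℝ E] [MeasurableSpace E]
    [BorelSpace E] {n : ℕ} (hn : Module.finrank ℝ E = n + 1) {θ : E} (hθ : θ ≠ 0) {S : Set E}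
    (hS : Bornology.IsBounded S) {s : ℝ} (hSθ : S ⊆ {y | ⟪θ, y⟫ = s}) : μH[n] S ≠ ∞ := by
  rcases S.eq_empty_or_nonempty with rfl | ⟨y₀, hy₀⟩
  · simp
  have : Fact (Module.finrank ℝ E = n + 1) := ⟨hn⟩
  set W := (ℝ ∙ θ)ᗮ
  have hW : Module.finrank ℝ W = n := Submodule.finrank_orthogonal_span_singleton hθ
  set G : W → E := fun w => w + y₀
  have hG : Isometry G := (IsometryEquiv.addRight y₀).isometry.comp isometry_subtype_coe
  have hSG : S ⊆ range G := fun y hy => ⟨⟨y - y₀, by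
    rw [Submodule.mem_orthogonal_singleton_iff_inner_right, inner_sub_right, hSθ hy, hSθ hy₀,
      sub_self]⟩, sub_add_cancel y y₀⟩
  rw [← image_preimage_eq_of_subset hSG, hG.hausdorffMeasure_image (Or.inl n.cast_nonneg), ← hW]
  exact ((hG.antilipschitz.isBounded_preimage hS).measure_lt_top).ne

lemma homothety_image_slice_subset {K : Set E} (hK : Convex ℝ K) {x₀ : E} (hx₀ : x₀ ∈ K)
    {c : ℝ} (hc : c ∈ Icc 0 1) (θ : E) (t : ℝ) :
    AffineMap.homothety x₀ c '' slice K θ t ⊆ slice K θ (c * t + (1 - c) * ⟪θ, x₀⟫) := by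
  rintro _ ⟨z, ⟨hzK, hzt⟩, rfl⟩
  rw [AffineMap.homothety_eq_lineMap]
  refine ⟨hK.lineMap_mem hx₀ hzK hc, ?_⟩
  change ⟪θ, z⟫ = t at hzt
  change ⟪θ, AffineMap.lineMap x₀ z c⟫ = _
  rw [AffineMap.lineMap_apply_module, inner_add_right, real_inner_smul_right,
    real_inner_smul_right, hzt]
  ring

lemma smul_hausdorffMeasure_slice_le [MeasurableSpace E] [BorelSpace E] {K : Set E}
    (hK : Convex ℝ K) {x₀ : E} (hx₀ : x₀ ∈ K) {c : ℝ} (hc0 : 0 < c) (hc1 : c ≤ 1)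
    {r : ℝ} (hr : 0 ≤ r) (θ : E) (t : ℝ) :
    ‖c‖₊ ^ r • μH[r] (slice K θ t) ≤ μH[r] (slice K θ (c * t + (1 - c) * ⟪θ, x₀⟫)) := by
  rw [← hausdorffMeasure_homothety_image hr x₀ hc0.ne']
  exact measure_mono (homothety_image_slice_subset hK hx₀ ⟨hc0.le, hc1⟩ θ t)

end Hyperplane

lemma exists_mem_inner_eq_suppFn {d : ℕ} {K : Set (Euc d)} (hK : IsCompact K) (hne : K.Nonempty)
    (θ : Euc d) : ∃ x ∈ K, ⟪θ, x⟫ = suppFn K θ := by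
  obtain ⟨x, hxK, hx⟩ :=
    hK.exists_sSup_image_eq hne (innerSL ℝ θ).continuous.continuousOn
  exact ⟨x, hxK, hx.symm⟩

lemma psi_mul_pow_le_psi {d : ℕ} (hd : 1 ≤ d) {K : Set (Euc d)} (hKc : Convex ℝ K)
    (hKb : Bornology.IsBounded K) {θ : Euc d} (hθ : θ ≠ 0) {x₀ : Euc d} (hx₀ : x₀ ∈ K)
    {t s : ℝ} (hts : t ≤ s) (hsb : s < ⟪θ, x₀⟫) :
    psi K θ t * ((⟪θ, x₀⟫ - s) / (⟪θ, x₀⟫ - t)) ^ (d - 1) ≤ psi K θ s := by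
  set b := ⟪θ, x₀⟫
  set c := (b - s) / (b - t)
  have hbt : 0 < b - t := by linarith
  have hc0 : 0 < c := div_pos (by linarith) hbt
  have hc1 : c ≤ 1 := (div_le_one hbt).2 (by linarith)
  have hs : c * t + (1 - c) * b = s := by
    simp only [c]
    field_simp
    ring
  have hexp : (d : ℝ) - 1 = ((d - 1 : ℕ) : ℝ) := by rw [Nat.cast_sub hd, Nat.cast_one]
  have hle := smul_hausdorffMeasure_slice_le hKc hx₀ hc0 hc1 (r := (d : ℝ) - 1)
    (by rw [hexp]; positivity) θ t
  rw [hs] at hle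
  have hfin : μH[(d : ℝ) - 1] (slice K θ s) ≠ ∞ := by
    rw [hexp]
    have h1 : Module.finrank ℝ (Euc d) = (d - 1) + 1 := by
      rw [finrank_euclideanSpace_fin]; omega
    exact hausdorffMeasure_ne_top_of_subset_hyperplane h1 hθ (hKb.subset inter_subset_left)
      inter_subset_right
  have hreal := ENNReal.toReal_mono hfin hle
  have hpow : ((‖c‖₊ ^ ((d : ℝ) - 1) : NNReal) : ℝ) = c ^ (d - 1) := by
    rw [NNReal.coe_rpow, coe_nnnorm, Real.norm_of_nonneg hc0.le, hexp, Real.rpow_natCast]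
  rw [ENNReal.toReal_smul, NNReal.smul_def, smul_eq_mul, hpow] at hreal
  rw [psi, psi, div_mul_eq_mul_div, mul_comm]
  exact div_le_div_of_nonneg_right hreal ENNReal.toReal_nonneg

lemma integral_sub_div_sub_pow (n : ℕ) (t b : ℝ) :
    ∫ s in t..b, ((b - s) / (b - t)) ^ n = (b - t) / (n + 1) := by
  rcases eq_or_ne t b with rfl | htb
  · simp
  simp_rw [div_pow]
  rw [intervalIntegral.integral_div, intervalIntegral.integral_comp_sub_left (fun u => u ^ n) b,
    sub_self, integral_pow, zero_pow n.succ_ne_zero, pow_succ]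
  field_simp
  ring

lemma mul_div_le_integral_of_pow_le {f : ℝ → ℝ} {t b : ℝ} (htb : t ≤ b) (n : ℕ)
    (hf : IntervalIntegrable f volume t b)
    (hle : ∀ s ∈ Ioo t b, f t * ((b - s) / (b - t)) ^ n ≤ f s) :
    f t * (b - t) / (n + 1) ≤ ∫ s in t..b, f s := by
  calc f t * (b - t) / (n + 1) = ∫ s in t..b, f t * ((b - s) / (b - t)) ^ n := by
        rw [intervalIntegral.integral_const_mul, integral_sub_div_sub_pow, mul_div_assoc]
    _ ≤ ∫ s in t..b, f s :=
        intervalIntegral.integral_mono_on_of_le_Ioo htb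
          (Continuous.intervalIntegrable (by fun_prop) _ _) hf hle

/-- For a convex body `K ⊆ ℝᵈ`, a unit vector `θ`, and `t ∈ [m_{K,θ}, h_K(θ)]` (where `m` is
the median, `A_{K,θ}(m) = 1/2`): `A_{K,θ}(t) ≥ d⁻¹ (h_K(θ) - t) ψ_{K,θ}(t)`. -/
theorem sectionTail_ge_alpha_mul_psi
    (d : ℕ) (hd : 1 ≤ d) (K : Set (Euc d)) (hK : IsConvexBody K)
    (θ : Euc d) (hθ : ‖θ‖ = 1)
    (m : ℝ) (hm : sectionTail K θ m = 1 / 2)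
    (t : ℝ) (ht : t ∈ Set.Icc m (suppFn K θ)) :
    (d : ℝ)⁻¹ * (suppFn K θ - t) * psi K θ t ≤ sectionTail K θ t := by
  obtain ⟨hmt, htb⟩ := ht
  obtain ⟨hKc, hKconv, hKint⟩ := hK
  obtain ⟨x₀, hx₀K, hx₀⟩ := exists_mem_inner_eq_suppFn hKc (hKint.mono interior_subset) θ
  have hθ0 : θ ≠ 0 := norm_ne_zero_iff.mp (hθ ▸ one_ne_zero)
  -- a non-integrable `psi` would make `sectionTail K θ m` the junk value `0`
  have hIntm : IntervalIntegrable (psi K θ) volume m (suppFn K θ) := by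
    by_contra h
    rw [sectionTail, intervalIntegral.integral_undef h] at hm
    norm_num at hm
  have hInt : IntervalIntegrable (psi K θ) volume t (suppFn K θ) :=
    hIntm.mono_set (by
      rw [uIcc_of_le htb, uIcc_of_le (hmt.trans htb)]; exact Icc_subset_Icc_left hmt)
  have hbound := mul_div_le_integral_of_pow_le htb (d - 1) hInt fun s hs =>
    hx₀ ▸ psi_mul_pow_le_psi hd hKconv hKc.isBounded hθ0 hx₀K hs.1.le (hx₀ ▸ hs.2)
  have hcast : ((d - 1 : ℕ) : ℝ) + 1 = d := by rw [Nat.cast_sub hd, Nat.cast_one, sub_add_cancel]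
  rw [hcast] at hbound
  calc (d : ℝ)⁻¹ * (suppFn K θ - t) * psi K θ t = psi K θ t * (suppFn K θ - t) / d := by ring
    _ ≤ sectionTail K θ t := hbound
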